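/- For a ∈ ℂ with Im a < 1/2, as s → +∞ on the positive real axis, e^{-is/4} s^{ia/2 + 1/4} v_+(s) → 1, where v_+(s) = (1/Γ(ia/2 + 1/4)) e^{is/4} ∫₀^∞ e^{-ps} p^{ia/2 - 3/4}(1+2ip)^{-ia/2-3/4} dp. -/

import Mathlib

/-!
Substituting `p = q / s` turns `s^{ia/2 + 1/4} ∫₀^∞ e^{-ps} p^{ia/2 - 3/4} (1 + 2ip)^{-ia/2 - 3/4} dp`
into `∫₀^∞ e^{-q} q^{ia/2 - 3/4} (1 + 2iq/s)^{-ia/2 - 3/4} dq`. Since `Re(-ia/2 - 3/4) ≤ 0` and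
`Re(1 + 2iq/s) = 1`, the last factor is bounded by `e^{π |Im(-ia/2 - 3/4)|}`, and it tends to `1`
pointwise; `Im a < 1/2` makes `e^{-q} q^{ia/2 - 3/4}` integrable, so dominated convergence gives the
limit `Γ(ia/2 + 1/4)`. The phases `e^{∓is/4}` cancel.
-/

open Complex Filter MeasureTheory

/-- The Laplace-integral solution `v₊(a,s)`. -/
noncomputable def vplus (a s : ℂ) : ℂ :=
  (Complex.Gamma (Complex.I * a / 2 + 1 / 4))⁻¹ * Complex.exp (Complex.I * s / 4) *
    ∫ p in Set.Ioi (0 : ℝ),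
      Complex.exp (-(p : ℂ) * s) * (p : ℂ) ^ (Complex.I * a / 2 - 3 / 4) *
        (1 + 2 * Complex.I * (p : ℂ)) ^ (-Complex.I * a / 2 - 3 / 4)

open Set Topology

namespace Complex

lemma norm_cpow_le_exp_pi_mul_abs_im {x w : ℂ} (hx : 1 ≤ ‖x‖) (hw : w.re ≤ 0) :
    ‖x ^ w‖ ≤ Real.exp (Real.pi * |w.im|) := by
  have hx0 : x ≠ 0 := norm_pos_iff.mp (zero_lt_one.trans_le hx)
  have harg : -(x.arg * w.im) ≤ Real.pi * |w.im| :=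
    calc -(x.arg * w.im) ≤ |x.arg| * |w.im| := abs_mul x.arg w.im ▸ neg_le_abs _
      _ ≤ Real.pi * |w.im| := by gcongr; exact abs_arg_le_pi x
  rw [norm_cpow_of_ne_zero hx0, div_eq_mul_inv, ← Real.exp_neg]
  calc ‖x‖ ^ w.re * Real.exp (-(x.arg * w.im)) ≤ 1 * Real.exp (Real.pi * |w.im|) := by
        gcongr
        exact Real.rpow_le_one_of_one_le_of_nonpos hx hw
    _ = Real.exp (Real.pi * |w.im|) := one_mul _

lemma cpow_add_one_mul_integral_exp_mul_cpow_mul (z : ℂ) (g : ℝ → ℂ) {s : ℝ} (hs : 0 < s) :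
    (s : ℂ) ^ (z + 1) * ∫ p in Ioi (0 : ℝ), exp (-(p : ℂ) * s) * (p : ℂ) ^ z * g p =
      ∫ q in Ioi (0 : ℝ), exp (-(q : ℂ)) * (q : ℂ) ^ z * g (q / s) := by
  set F : ℝ → ℂ := fun q => exp (-(q : ℂ)) * (q : ℂ) ^ z * g (q / s)
  have hs0 : (s : ℂ) ≠ 0 := ofReal_ne_zero.mpr hs.ne'
  have hF : ∀ p ∈ Ioi (0 : ℝ),
      F (p * s) = (s : ℂ) ^ z * (exp (-(p : ℂ) * s) * (p : ℂ) ^ z * g p) := by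
    intro p hp
    simp only [F, mul_div_cancel_right₀ _ hs.ne', ofReal_mul,
      mul_cpow_ofReal_nonneg (le_of_lt hp) hs.le]
    ring_nf
  have hsub := integral_comp_mul_right_Ioi F 0 hs
  rw [zero_mul, setIntegral_congr_fun measurableSet_Ioi hF, integral_const_mul] at hsub
  rw [cpow_add _ _ hs0, cpow_one, mul_comm _ (s : ℂ), mul_assoc, hsub, real_smul, ofReal_inv,
    ← mul_assoc, mul_inv_cancel₀ hs0, one_mul]

/-- Watson's lemma at leading order. -/
theorem tendsto_cpow_add_one_mul_integral_exp_mul_cpow_mul {z : ℂ} (hz : -1 < z.re)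
    {g : ℝ → ℂ} {g₀ : ℂ} {C : ℝ} (hg_cont : ContinuousOn g (Ioi 0))
    (hg_bound : ∀ p ∈ Ioi (0 : ℝ), ‖g p‖ ≤ C) (hg_lim : Tendsto g (𝓝[>] 0) (𝓝 g₀)) :
    Tendsto (fun s : ℝ =>
        (s : ℂ) ^ (z + 1) * ∫ p in Ioi (0 : ℝ), exp (-(p : ℂ) * s) * (p : ℂ) ^ z * g p)
      atTop (𝓝 (Gamma (z + 1) * g₀)) := by
  have hz1 : 0 < (z + 1).re := by rw [add_re, one_re]; linarith
  have hΓ : Gamma (z + 1) * g₀ = ∫ q in Ioi (0 : ℝ), exp (-(q : ℂ)) * (q : ℂ) ^ z * g₀ := by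
    rw [Gamma_eq_integral hz1, GammaIntegral, ← integral_mul_const]
    refine setIntegral_congr_fun measurableSet_Ioi fun q _ => ?_
    simp [ofReal_exp]
  rw [hΓ]
  refine Tendsto.congr' ((eventually_gt_atTop 0).mono fun s hs =>
    (cpow_add_one_mul_integral_exp_mul_cpow_mul z g hs).symm) ?_
  refine tendsto_integral_filter_of_dominated_convergence
    (fun q => C * (Real.exp (-q) * q ^ z.re)) ?_ ?_ ?_ ?_
  · filter_upwards [eventually_gt_atTop 0] with s hs
    refine ContinuousOn.aestronglyMeasurable ?_ measurableSet_Ioi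
    refine ContinuousOn.mul ?_ (hg_cont.comp (by fun_prop) fun q hq => div_pos hq hs)
    exact ContinuousOn.mul (by fun_prop)
      fun q hq => (continuousAt_cpow_const (ofReal_mem_slitPlane.mpr hq)).comp
        continuous_ofReal.continuousAt |>.continuousWithinAt
  · filter_upwards [eventually_gt_atTop 0] with s hs
    refine (ae_restrict_iff' measurableSet_Ioi).mpr (ae_of_all _ fun q hq => ?_)
    rw [norm_mul, norm_mul, ← ofReal_neg, norm_exp_ofReal, norm_cpow_eq_rpow_re_of_pos hq,
      mul_comm C]
    exact mul_le_mul_of_nonneg_left (hg_bound _ (div_pos hq hs))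
      (mul_nonneg (Real.exp_nonneg _) (Real.rpow_nonneg (le_of_lt hq) _))
  · simpa using ((Real.GammaIntegral_convergent hz1).const_mul C)
  · refine (ae_restrict_iff' measurableSet_Ioi).mpr (ae_of_all _ fun q hq => ?_)
    have hq_div : Tendsto (fun s : ℝ => q / s) atTop (𝓝[>] 0) :=
      tendsto_nhdsWithin_iff.mpr ⟨tendsto_const_nhds.div_atTop tendsto_id,
        (eventually_gt_atTop 0).mono fun s hs => div_pos hq hs⟩
    exact (hg_lim.comp hq_div).const_mul _

end Complex

/-- Watson's lemma, leading order: for `Im a < 1/2`, as `s → +∞` along the positive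
real axis, `e^{-is/4} s^{ia/2 + 1/4} v₊(a,s) → 1`. -/
theorem vplus_asymptotics (a : ℂ) (ha : a.im < 1 / 2) :
    Tendsto
      (fun s : ℝ =>
        Complex.exp (-Complex.I * (s : ℂ) / 4) *
          (s : ℂ) ^ (Complex.I * a / 2 + 1 / 4) * vplus a (s : ℂ))
      atTop (nhds 1) := by
  set z : ℂ := I * a / 2 - 3 / 4
  set w : ℂ := -I * a / 2 - 3 / 4
  have hz : -1 < z.re := by simp [z]; linarith
  have hw : w.re ≤ 0 := by simp [w]; linarith
  have hbase : ∀ p : ℝ, 1 + 2 * I * p ∈ slitPlane := fun p => Or.inl (by simp)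
  have hg_cont : Continuous fun p : ℝ => (1 + 2 * I * p) ^ w :=
    (by fun_prop : Continuous fun p : ℝ => 1 + 2 * I * p).cpow continuous_const hbase
  have hg_lim : Tendsto (fun p : ℝ => (1 + 2 * I * p) ^ w) (𝓝[>] 0) (𝓝 1) := by
    simpa using (hg_cont.tendsto 0).mono_left nhdsWithin_le_nhds
  have hg_bound : ∀ p ∈ Ioi (0 : ℝ), ‖(1 + 2 * I * p) ^ w‖ ≤ Real.exp (Real.pi * |w.im|) :=
    fun p _ => norm_cpow_le_exp_pi_mul_abs_im (by simpa using re_le_norm (1 + 2 * I * p)) hw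
  have hΓ : Gamma (z + 1) ≠ 0 := Gamma_ne_zero_of_re_pos (by rw [add_re, one_re]; linarith)
  have h := (tendsto_cpow_add_one_mul_integral_exp_mul_cpow_mul hz hg_cont.continuousOn
    hg_bound hg_lim).const_mul (Gamma (z + 1))⁻¹
  rw [mul_one, inv_mul_cancel₀ hΓ] at h
  refine h.congr fun s => ?_
  have hz1 : I * a / 2 + 1 / 4 = z + 1 := by ring
  have hexp : exp (-I * s / 4) * exp (I * s / 4) = 1 := by
    rw [← exp_add, neg_mul, neg_div, neg_add_cancel, exp_zero]
  rw [vplus, hz1]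
  linear_combination -(Gamma (z + 1))⁻¹ * (s : ℂ) ^ (z + 1) *
    (∫ p in Ioi (0 : ℝ), exp (-(p : ℂ) * s) * (p : ℂ) ^ z * (1 + 2 * I * p) ^ w) * hexp
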